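/- arXiv:2002.09603 — 4 statements merged into one kernel-verified Lean document; each statement's English description precedes it below -/
import Mathlib

section
/- Let A_uu be an invertible n_u×n_u matrix, and consider the 3×3 block matrix A_H = [[A_uu, A_up, 0],[A_pu, B̄_pp, Δt·A_pπ],[0, A_πp, A_ππ]] and block upper triangular preconditioner M = [[A_uu, A_up, 0],[0, B̃_p, Δt·A_pπ],[0, 0, C̃_π]] with B̃_p and C̃_π invertible, where C̃_π = A_ππ − Δt·A_πp·B̃_p⁻¹·A_pπ. Then the preconditioned matrix T = A_H·M⁻¹ equals the identity plus a matrix Z' whose rank is at most 2·n_p, so that at least n_u + n_π − n_p eigenvalues of T equal 1. -/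
/-!
`T - 1 = (A_H - M) M⁻¹`, and `A_H - M` has rank at most `2 n_p`: its `u` block row vanishes,
and since `A_ππ - C̃_π = Δt A_πp B̃_p⁻¹ A_pπ` its `π` block row is `A_πp [0, 1, Δt B̃_p⁻¹ A_pπ]`,
so it factors through `ℝ^(n_p + n_p)`. Rank–nullity then bounds the eigenspace of `T` for 1.
-/

open Matrix

namespace Matrix

variable {n R : Type*} [Fintype n] [Field R]

theorem rank_add_finrank_ker_mulVecLin (A : Matrix n n R) :
    A.rank + Module.finrank R (LinearMap.ker A.mulVecLin) = Fintype.card n := by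
  rw [rank, LinearMap.finrank_range_add_finrank_ker, Module.finrank_fintype_fun_eq_card]

theorem rank_mul_inv_sub_one_le [DecidableEq n] (A M : Matrix n n R) (hM : IsUnit M.det) :
    (A * M⁻¹ - 1).rank ≤ (A - M).rank := by
  rw [← mul_nonsing_inv M hM, ← Matrix.sub_mul]
  exact rank_mul_le_left _ _

end Matrix

section BlockPreconditioner

variable {u p q R : Type*} [Fintype p] [DecidableEq p] [Field R]

theorem blockSystem_sub_preconditioner_eq_mul
    (Auu : Matrix u u R) (Aup : Matrix u p R) (Apu : Matrix p u R) (Bpp Btp : Matrix p p R)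
    (Apπ : Matrix p q R) (Aπp : Matrix q p R) (Aππ : Matrix q q R) (Δt : R) :
    fromBlocks (fromBlocks Auu Aup Apu Bpp) (fromRows 0 (Δt • Apπ)) (fromCols 0 Aπp) Aππ -
        fromBlocks (fromBlocks Auu Aup 0 Btp) (fromRows 0 (Δt • Apπ)) 0
          (Aππ - Δt • (Aπp * Btp⁻¹ * Apπ)) =
      fromBlocks (fromRows (0 : Matrix u p R) 1) 0 0 Aπp *
        fromBlocks (fromCols Apu (Bpp - Btp)) 0 (fromCols 0 1) (Δt • (Btp⁻¹ * Apπ)) := by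
  rw [fromBlocks_multiply]
  ext ((i | i) | i) ((j | j) | j) <;>
    simp [fromBlocks, Matrix.mul_apply, Finset.mul_sum, Finset.sum_mul, mul_assoc]
  exact Finset.sum_comm

theorem rank_blockSystem_sub_preconditioner_le [Fintype u] [Fintype q]
    (Auu : Matrix u u R) (Aup : Matrix u p R) (Apu : Matrix p u R) (Bpp Btp : Matrix p p R)
    (Apπ : Matrix p q R) (Aπp : Matrix q p R) (Aππ : Matrix q q R) (Δt : R) :
    (fromBlocks (fromBlocks Auu Aup Apu Bpp) (fromRows 0 (Δt • Apπ)) (fromCols 0 Aπp) Aππ -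
        fromBlocks (fromBlocks Auu Aup 0 Btp) (fromRows 0 (Δt • Apπ)) 0
          (Aππ - Δt • (Aπp * Btp⁻¹ * Apπ))).rank ≤ 2 * Fintype.card p := by
  rw [blockSystem_sub_preconditioner_eq_mul]
  calc _ ≤ _ := rank_mul_le_left _ _
    _ ≤ Fintype.card (p ⊕ p) := rank_le_card_width _
    _ = 2 * Fintype.card p := by rw [Fintype.card_sum, two_mul]

end BlockPreconditioner

theorem stmt0_general {nu np npi : ℕ}
    (Auu : Matrix (Fin nu) (Fin nu) ℝ) (Aup : Matrix (Fin nu) (Fin np) ℝ)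
    (Apu : Matrix (Fin np) (Fin nu) ℝ) (Bpp : Matrix (Fin np) (Fin np) ℝ)
    (Apπ : Matrix (Fin np) (Fin npi) ℝ) (Aπp : Matrix (Fin npi) (Fin np) ℝ)
    (Aππ : Matrix (Fin npi) (Fin npi) ℝ) (Δt : ℝ)
    (Btp : Matrix (Fin np) (Fin np) ℝ)
    (hAuu : IsUnit Auu.det) (hBtp : IsUnit Btp.det)
    (Ctπ : Matrix (Fin npi) (Fin npi) ℝ)
    (hCt : Ctπ = Aππ - Δt • (Aπp * Btp⁻¹ * Apπ))
    (hCtπ : IsUnit Ctπ.det)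
    (AH M : Matrix ((Fin nu ⊕ Fin np) ⊕ Fin npi) ((Fin nu ⊕ Fin np) ⊕ Fin npi) ℝ)
    (hAH : AH = fromBlocks (fromBlocks Auu Aup Apu Bpp)
      (fromRows 0 (Δt • Apπ)) (fromCols 0 Aπp) Aππ)
    (hM : M = fromBlocks (fromBlocks Auu Aup 0 Btp)
      (fromRows 0 (Δt • Apπ)) 0 Ctπ) :
    ∃ Z' : Matrix ((Fin nu ⊕ Fin np) ⊕ Fin npi) ((Fin nu ⊕ Fin np) ⊕ Fin npi) ℝ,
      AH * M⁻¹ = 1 + Z' ∧ Z'.rank ≤ 2 * np ∧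
      nu + npi - np ≤ Module.finrank ℝ (LinearMap.ker (AH * M⁻¹ - 1).mulVecLin) := by
  have hMdet : IsUnit M.det := by
    rw [hM, det_fromBlocks_zero₂₁, det_fromBlocks_zero₂₁]
    exact (hAuu.mul hBtp).mul hCtπ
  have hrank : (AH * M⁻¹ - 1).rank ≤ 2 * np := by
    refine (rank_mul_inv_sub_one_le AH M hMdet).trans ?_
    subst hAH hM hCt
    simpa only [Fintype.card_fin] using
      rank_blockSystem_sub_preconditioner_le Auu Aup Apu Bpp Btp Apπ Aπp Aππ Δt
  refine ⟨AH * M⁻¹ - 1, (add_sub_cancel _ _).symm, hrank, ?_⟩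
  have hnullity := rank_add_finrank_ker_mulVecLin (AH * M⁻¹ - 1)
  simp only [Fintype.card_sum, Fintype.card_fin] at hnullity
  omega

/-- The preconditioned matrix `T = A_H * M⁻¹` equals the identity plus a matrix of rank
at most `2 * np`, hence the eigenvalue 1 has (geometric) multiplicity at least
`nu + npi - np`. -/
theorem stmt0 {nu np npi : ℕ} (hnp : np < npi)
    (Auu : Matrix (Fin nu) (Fin nu) ℝ) (Aup : Matrix (Fin nu) (Fin np) ℝ)
    (Apu : Matrix (Fin np) (Fin nu) ℝ) (Bpp : Matrix (Fin np) (Fin np) ℝ)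
    (Apπ : Matrix (Fin np) (Fin npi) ℝ) (Aπp : Matrix (Fin npi) (Fin np) ℝ)
    (Aππ : Matrix (Fin npi) (Fin npi) ℝ) (Δt : ℝ)
    (Btp : Matrix (Fin np) (Fin np) ℝ)
    (hAuu : IsUnit Auu.det) (hBtp : IsUnit Btp.det)
    (Ctπ : Matrix (Fin npi) (Fin npi) ℝ)
    (hCt : Ctπ = Aππ - Δt • (Aπp * Btp⁻¹ * Apπ))
    (hCtπ : IsUnit Ctπ.det)
    (AH M : Matrix ((Fin nu ⊕ Fin np) ⊕ Fin npi) ((Fin nu ⊕ Fin np) ⊕ Fin npi) ℝ)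
    (hAH : AH = fromBlocks (fromBlocks Auu Aup Apu Bpp)
      (fromRows 0 (Δt • Apπ)) (fromCols 0 Aπp) Aππ)
    (hM : M = fromBlocks (fromBlocks Auu Aup 0 Btp)
      (fromRows 0 (Δt • Apπ)) 0 Ctπ) :
    ∃ Z' : Matrix ((Fin nu ⊕ Fin np) ⊕ Fin npi) ((Fin nu ⊕ Fin np) ⊕ Fin npi) ℝ,
      AH * M⁻¹ = 1 + Z' ∧ Z'.rank ≤ 2 * np ∧
      nu + npi - np ≤ Module.finrank ℝ (LinearMap.ker (AH * M⁻¹ - 1).mulVecLin) :=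
  stmt0_general Auu Aup Apu Bpp Apπ Aπp Aππ Δt Btp hAuu hBtp Ctπ hCt hCtπ AH M hAH hM
end

section
/- With T = A_H·M⁻¹ as above, every eigenvalue of T is either 1 or of the form 1 + μ, where μ is a nonzero eigenvalue of the block matrix Z = [[E_p, −Δt·E_p·A_pπ·C̃_π⁻¹],[A_πp·B̃_p⁻¹, 0]] with E_p = B_p·B̃_p⁻¹ − I. -/
/-!
`A_H` and `M` agree in the first block row, so `A_H - M = U K` with `U` the inclusion of the last
two block rows and `K` the rows in which they differ (its `π`-block `Δt A_πp B̃_p⁻¹ A_pπ` is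
`A_ππ - C̃_π`). Hence `T = 1 + U (K M⁻¹)`, and an eigenvalue `λ ≠ 1` of `T` yields the nonzero
eigenvalue `λ - 1` of `U (K M⁻¹)`, hence of `(K M⁻¹) U`. Multiplying out with the block
upper-triangular inverse of `M` shows `K M⁻¹ U = Z`.
-/

open Matrix

section EigenvectorTransfer

variable {K : Type*} [Field K] {m n : Type*} [Fintype m] [Fintype n]

theorem Matrix.exists_eigenvector_mul_swap {U : Matrix m n K} {V : Matrix n m K}
    {v : m → K} {μ : K} (hv : v ≠ 0) (hμ : μ ≠ 0) (h : (U * V) *ᵥ v = μ • v) :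
    ∃ w ≠ 0, (V * U) *ᵥ w = μ • w := by
  have hUV : U *ᵥ (V *ᵥ v) = μ • v := by rw [mulVec_mulVec, h]
  refine ⟨V *ᵥ v, fun h0 ↦ ?_, ?_⟩
  · rw [h0, mulVec_zero, eq_comm, smul_eq_zero] at hUV
    exact hUV.elim hμ hv
  · rw [← mulVec_mulVec, hUV, mulVec_smul]

theorem Matrix.exists_eigenvector_mul_swap_of_one_add_mul [DecidableEq m]
    {U : Matrix m n K} {V : Matrix n m K} {v : m → K} {lam : K}
    (hv : v ≠ 0) (hlam : lam ≠ 1) (h : (1 + U * V) *ᵥ v = lam • v) :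
    ∃ w ≠ 0, (V * U) *ᵥ w = (lam - 1) • w := by
  refine exists_eigenvector_mul_swap hv (sub_ne_zero.mpr hlam) ?_
  rw [add_mulVec, one_mulVec] at h
  rw [sub_smul, one_smul, ← h, add_sub_cancel_left]

end EigenvectorTransfer

namespace BlockPreconditioner

variable {R : Type*} [CommRing R] {u p q : Type*} [Fintype p] [Fintype q]
  [DecidableEq p] [DecidableEq q]

variable (R u p q) in
def lowerInclusion : Matrix ((u ⊕ p) ⊕ q) (p ⊕ q) R :=
  fromBlocks (fromRows 0 1) 0 0 1

noncomputable def lowerDefect (Apu : Matrix p u R) (Bpp Btp : Matrix p p R)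
    (Apπ : Matrix p q R) (Aπp : Matrix q p R) (Δt : R) : Matrix (p ⊕ q) ((u ⊕ p) ⊕ q) R :=
  fromBlocks (fromCols Apu (Bpp - Btp)) 0 (fromCols 0 Aπp) (Δt • (Aπp * Btp⁻¹ * Apπ))

theorem fromBlocks_eq_add_lowerInclusion_mul_lowerDefect (Auu : Matrix u u R)
    (Aup : Matrix u p R) (Apu : Matrix p u R) (Bpp Btp : Matrix p p R) (Apπ : Matrix p q R)
    (Aπp : Matrix q p R) (Aππ : Matrix q q R) (Δt : R) :
    fromBlocks (fromBlocks Auu Aup Apu Bpp) (fromRows 0 (Δt • Apπ)) (fromCols 0 Aπp) Aππ =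
      fromBlocks (fromBlocks Auu Aup 0 Btp) (fromRows 0 (Δt • Apπ)) 0
          (Aππ - Δt • (Aπp * Btp⁻¹ * Apπ)) +
        lowerInclusion R u p q * lowerDefect Apu Bpp Btp Apπ Aπp Δt := by
  ext ((i | i) | i) ((j | j) | j) <;>
    simp [lowerInclusion, lowerDefect, fromBlocks_multiply, fromRows_mul]

theorem lowerDefect_mul_inv_mul_lowerInclusion [Fintype u] [DecidableEq u]
    (Auu : Matrix u u R) (Aup : Matrix u p R) (Apu : Matrix p u R) (Bpp Btp : Matrix p p R)
    (Apπ : Matrix p q R) (Aπp : Matrix q p R) (Ctπ : Matrix q q R) (Δt : R)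
    (Ep : Matrix p p R) (hAuu : IsUnit Auu.det) (hBtp : IsUnit Btp.det)
    (hCtπ : IsUnit Ctπ.det) (hEp : Ep = (Bpp - Apu * Auu⁻¹ * Aup) * Btp⁻¹ - 1) :
    lowerDefect Apu Bpp Btp Apπ Aπp Δt *
        (fromBlocks (fromBlocks Auu Aup 0 Btp) (fromRows 0 (Δt • Apπ)) 0 Ctπ)⁻¹ *
        lowerInclusion R u p q =
      fromBlocks Ep (-(Δt • (Ep * Apπ * Ctπ⁻¹))) (Aπp * Btp⁻¹) 0 := by
  have hAuu' := (isUnit_iff_isUnit_det Auu).mpr hAuu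
  have hBtp' := (isUnit_iff_isUnit_det Btp).mpr hBtp
  have hCtπ' := (isUnit_iff_isUnit_det Ctπ).mpr hCtπ
  rw [inv_fromBlocks_zero₂₁_of_isUnit_iff, inv_fromBlocks_zero₂₁_of_isUnit_iff]
  · subst hEp
    simp [lowerInclusion, lowerDefect, fromBlocks_multiply, fromBlocks_mul_fromRows,
      fromCols_mul_fromRows, Matrix.mul_assoc, Matrix.sub_mul, mul_nonsing_inv _ hBtp,
      mul_nonsing_inv_cancel_left _ _ hBtp, smul_sub]
    constructor <;> abel
  · exact iff_of_true hAuu' hBtp'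
  · exact iff_of_true (isUnit_fromBlocks_zero₂₁.mpr ⟨hAuu', hBtp'⟩) hCtπ'

end BlockPreconditioner

open BlockPreconditioner in
/-- Every eigenvalue of the preconditioned matrix `T = A_H * M⁻¹` is either `1`
or of the form `1 + μ` for a nonzero eigenvalue `μ` of the block matrix
`Z = [[E_p, −Δt·E_p·A_pπ·C̃_π⁻¹], [A_πp·B̃_p⁻¹, 0]]` with `E_p = B_p·B̃_p⁻¹ − I`. -/
theorem stmt1 {nu np npi : ℕ}
    (Auu : Matrix (Fin nu) (Fin nu) ℝ) (Aup : Matrix (Fin nu) (Fin np) ℝ)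
    (Apu : Matrix (Fin np) (Fin nu) ℝ) (Bpp : Matrix (Fin np) (Fin np) ℝ)
    (Apπ : Matrix (Fin np) (Fin npi) ℝ) (Aπp : Matrix (Fin npi) (Fin np) ℝ)
    (Aππ : Matrix (Fin npi) (Fin npi) ℝ) (Δt : ℝ)
    (Btp : Matrix (Fin np) (Fin np) ℝ)
    (hAuu : IsUnit Auu.det) (hBtp : IsUnit Btp.det)
    (Ctπ : Matrix (Fin npi) (Fin npi) ℝ)
    (hCt : Ctπ = Aππ - Δt • (Aπp * Btp⁻¹ * Apπ))
    (hCtπ : IsUnit Ctπ.det)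
    (AH M : Matrix ((Fin nu ⊕ Fin np) ⊕ Fin npi) ((Fin nu ⊕ Fin np) ⊕ Fin npi) ℝ)
    (hAH : AH = fromBlocks (fromBlocks Auu Aup Apu Bpp)
      (fromRows 0 (Δt • Apπ)) (fromCols 0 Aπp) Aππ)
    (hM : M = fromBlocks (fromBlocks Auu Aup 0 Btp)
      (fromRows 0 (Δt • Apπ)) 0 Ctπ)
    (Bp Ep : Matrix (Fin np) (Fin np) ℝ)
    (hBp : Bp = Bpp - Apu * Auu⁻¹ * Aup)
    (hEp : Ep = Bp * Btp⁻¹ - 1)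
    (Z : Matrix (Fin np ⊕ Fin npi) (Fin np ⊕ Fin npi) ℝ)
    (hZ : Z = fromBlocks Ep (-(Δt • (Ep * Apπ * Ctπ⁻¹))) (Aπp * Btp⁻¹) 0) :
    ∀ lam : ℂ,
      (∃ v : ((Fin nu ⊕ Fin np) ⊕ Fin npi) → ℂ, v ≠ 0 ∧
        ((AH * M⁻¹).map Complex.ofReal).mulVec v = lam • v) →
      lam = 1 ∨ ∃ μ : ℂ, μ ≠ 0 ∧ lam = 1 + μ ∧
        ∃ w : (Fin np ⊕ Fin npi) → ℂ, w ≠ 0 ∧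
          (Z.map Complex.ofReal).mulVec w = μ • w := by
  intro lam ⟨v, hv, hTv⟩
  by_cases hlam : lam = 1
  · exact Or.inl hlam
  set U := lowerInclusion ℝ (Fin nu) (Fin np) (Fin npi)
  set K := lowerDefect Apu Bpp Btp Apπ Aπp Δt
  have hMdet : IsUnit M.det := by
    rw [hM, det_fromBlocks_zero₂₁, det_fromBlocks_zero₂₁]
    exact (hAuu.mul hBtp).mul hCtπ
  have hT : AH * M⁻¹ = 1 + U * (K * M⁻¹) := by
    rw [hAH, fromBlocks_eq_add_lowerInclusion_mul_lowerDefect Auu Aup Apu Bpp Btp, ← hCt, ← hM,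
      Matrix.add_mul, mul_nonsing_inv _ hMdet, Matrix.mul_assoc]
  have hKU : K * M⁻¹ * U = Z := by
    rw [hZ, hM]
    exact lowerDefect_mul_inv_mul_lowerInclusion Auu Aup Apu Bpp Btp Apπ Aπp Ctπ Δt Ep hAuu hBtp
      hCtπ (by rw [hEp, hBp])
  have hmap {a b c : Type} [Fintype b] (X : Matrix a b ℝ) (Y : Matrix b c ℝ) :
      (X * Y).map Complex.ofReal = X.map Complex.ofReal * Y.map Complex.ofReal :=
    Matrix.map_mul (f := Complex.ofRealHom)
  obtain ⟨w, hw, hZw⟩ := exists_eigenvector_mul_swap_of_one_add_mul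
    (U := U.map Complex.ofReal) (V := (K * M⁻¹).map Complex.ofReal) hv hlam
    (by simpa [hT, Matrix.map_add, hmap] using hTv)
  refine Or.inr ⟨lam - 1, sub_ne_zero.mpr hlam, by ring, w, hw, ?_⟩
  rwa [← hKU, hmap]
end

section
/- Let Z = [[E_p, −Δt·E_p·F],[G, 0]] be a block matrix with E_p ∈ ℝ^{n_p×n_p}, F ∈ ℝ^{n_p×n_π}, G ∈ ℝ^{n_π×n_p}, Δt > 0. Then every nonzero eigenvalue μ of Z satisfies |μ| ≤ ε + √(ε² + 2·Δt·γ·ε), where ε = ‖E_p‖/2 and γ = ‖F·G‖ for any submultiplicative matrix norm compatible with a vector norm. -/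
/-!
If `(x, y)` is an eigenvector of `Z` for `μ ≠ 0`, the second block row gives `μ y = G x`, so
`x ≠ 0`, and substituting into the first row eliminates `y`:
`μ² x = E (μ x) - Δt · E (F G x)`. Applying the compatible vector norm yields
`|μ|² ≤ 2ε|μ| + 2Δtγε`, and solving this quadratic inequality in `|μ|` gives the bound.
-/

open Matrix

theorem le_add_sqrt_of_sq_le_two_mul_add {t a c : ℝ} (h : t ^ 2 ≤ 2 * a * t + c) :
    t ≤ a + √(a ^ 2 + c) := by
  have : |t - a| ≤ √(a ^ 2 + c) := Real.abs_le_sqrt (by nlinarith)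
  linarith [le_abs_self (t - a)]

theorem Matrix.map_ofReal_mul {l m n : Type*} [Fintype m] (A : Matrix l m ℝ) (B : Matrix m n ℝ) :
    (A * B).map Complex.ofReal = A.map Complex.ofReal * B.map Complex.ofReal :=
  Matrix.map_mul (f := Complex.ofRealHom)

section BlockEigenvector

variable {m n R : Type*} [Fintype m] [Fintype n]

theorem mulVec_fromBlocks_zero_eq_smul_iff [CommRing R] {A : Matrix m m R} {B : Matrix m n R}
    {C : Matrix n m R} {x : m → R} {y : n → R} {μ : R} :
    fromBlocks A B C 0 *ᵥ (x ⊕ᵥ y) = μ • (x ⊕ᵥ y) ↔ A *ᵥ x + B *ᵥ y = μ • x ∧ C *ᵥ x = μ • y := by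
  simp only [fromBlocks_mulVec, Sum.elim_comp_inl, Sum.elim_comp_inr, zero_mulVec, add_zero,
    funext_iff, Sum.forall, Sum.elim_inl, Sum.elim_inr, Pi.smul_apply]

theorem ne_zero_of_mulVec_fromBlocks_zero_eq_smul [Field R] {A : Matrix m m R}
    {B : Matrix m n R} {C : Matrix n m R} {x : m → R} {y : n → R} {μ : R} (hμ : μ ≠ 0)
    (hv : (x ⊕ᵥ y) ≠ 0) (h : fromBlocks A B C 0 *ᵥ (x ⊕ᵥ y) = μ • (x ⊕ᵥ y)) : x ≠ 0 := by
  rintro rfl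
  obtain ⟨-, h₂⟩ := mulVec_fromBlocks_zero_eq_smul_iff.1 h
  rw [mulVec_zero, eq_comm, smul_eq_zero_iff_right hμ] at h₂
  exact hv (by rw [h₂, Sum.elim_zero_zero])

theorem sq_smul_eq_of_mulVec_fromBlocks_eq_smul [CommRing R] {A : Matrix m m R}
    {F : Matrix m n R} {G : Matrix n m R} {c μ : R} {x : m → R} {y : n → R}
    (h : fromBlocks A (-(c • (A * F))) G 0 *ᵥ (x ⊕ᵥ y) = μ • (x ⊕ᵥ y)) :
    μ ^ 2 • x = A *ᵥ (μ • x) - c • A *ᵥ ((F * G) *ᵥ x) := by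
  obtain ⟨h₁, h₂⟩ := mulVec_fromBlocks_zero_eq_smul_iff.1 h
  calc μ ^ 2 • x = μ • (A *ᵥ x + -(c • (A * F)) *ᵥ y) := by rw [h₁, sq, mul_smul]
    _ = A *ᵥ (μ • x) - c • A *ᵥ (F *ᵥ (μ • y)) := by
      simp only [smul_add, neg_mulVec, smul_mulVec, mulVec_smul, ← mulVec_mulVec, smul_neg,
        smul_comm μ c]
      abel
    _ = A *ᵥ (μ • x) - c • A *ᵥ ((F * G) *ᵥ x) := by rw [← h₂, mulVec_mulVec _ F G]

end BlockEigenvector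

theorem norm_sq_le_of_sq_smul_eq {n : Type*} [Fintype n] (p : Seminorm ℂ (n → ℂ))
    {N : Matrix n n ℂ → ℝ} (hN : ∀ A x, p (A *ᵥ x) ≤ N A * p x) {A K : Matrix n n ℂ}
    {μ : ℂ} {c : ℝ} (hc : 0 ≤ c) {x : n → ℂ} (hx : 0 < p x)
    (h : μ ^ 2 • x = A *ᵥ (μ • x) - (c : ℂ) • A *ᵥ (K *ᵥ x)) :
    ‖μ‖ ^ 2 ≤ N A * ‖μ‖ + c * N A * N K := by
  have hA : 0 ≤ N A := nonneg_of_mul_nonneg_left ((apply_nonneg p _).trans (hN A x)) hx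
  refine le_of_mul_le_mul_right ?_ hx
  calc ‖μ‖ ^ 2 * p x = p (A *ᵥ (μ • x) - (c : ℂ) • A *ᵥ (K *ᵥ x)) := by
        rw [← h, map_smul_eq_mul, norm_pow]
    _ ≤ p (A *ᵥ (μ • x)) + p ((c : ℂ) • A *ᵥ (K *ᵥ x)) := map_sub_le_add p _ _
    _ = p (A *ᵥ (μ • x)) + c * p (A *ᵥ (K *ᵥ x)) := by
        rw [map_smul_eq_mul, Complex.norm_of_nonneg hc]
    _ ≤ N A * (‖μ‖ * p x) + c * (N A * (N K * p x)) := by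
        gcongr
        · exact (hN _ _).trans_eq (by rw [map_smul_eq_mul])
        · exact (hN _ _).trans (by gcongr; exact hN _ _)
    _ = (N A * ‖μ‖ + c * N A * N K) * p x := by ring

theorem stmt2_general {np npi : ℕ}
    (E : Matrix (Fin np) (Fin np) ℝ) (F : Matrix (Fin np) (Fin npi) ℝ)
    (G : Matrix (Fin npi) (Fin np) ℝ) (Δt : ℝ) (hΔt : 0 < Δt)
    (N : Matrix (Fin np) (Fin np) ℂ → ℝ) (nv : (Fin np → ℂ) → ℝ)
    (hnv0 : ∀ x, nv x = 0 ↔ x = 0)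
    (hnvadd : ∀ x y, nv (x + y) ≤ nv x + nv y)
    (hnvsmul : ∀ (c : ℂ) x, nv (c • x) = ‖c‖ * nv x)
    (hcompat : ∀ (A : Matrix (Fin np) (Fin np) ℂ) x, nv (A.mulVec x) ≤ N A * nv x)
    (Z : Matrix (Fin np ⊕ Fin npi) (Fin np ⊕ Fin npi) ℝ)
    (hZ : Z = fromBlocks E (-(Δt • (E * F))) G 0)
    (ε γ : ℝ)
    (hε : ε = N (E.map Complex.ofReal) / 2)
    (hγ : γ = N ((F * G).map Complex.ofReal))
    (μ : ℂ) (hμ : μ ≠ 0)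
    (heig : ∃ v : (Fin np ⊕ Fin npi) → ℂ, v ≠ 0 ∧
      (Z.map Complex.ofReal).mulVec v = μ • v) :
    ‖μ‖ ≤ ε + Real.sqrt (ε ^ 2 + 2 * Δt * γ * ε) := by
  obtain ⟨v, hv0, hv⟩ := heig
  let p : Seminorm ℂ (Fin np → ℂ) := Seminorm.of nv hnvadd hnvsmul
  have hZℂ : Z.map Complex.ofReal = fromBlocks (E.map Complex.ofReal)
      (-((Δt : ℂ) • (E.map Complex.ofReal * F.map Complex.ofReal))) (G.map Complex.ofReal) 0 := by
    rw [hZ, fromBlocks_map, Matrix.map_neg _ Complex.ofReal_neg,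
      Matrix.map_smulₛₗ _ Complex.ofReal _ (Complex.ofReal_mul Δt), map_ofReal_mul,
      Matrix.map_zero _ Complex.ofReal_zero]
  rw [hZℂ, ← Sum.elim_comp_inl_inr v] at hv
  rw [← Sum.elim_comp_inl_inr v] at hv0
  have hx : 0 < p (v ∘ Sum.inl) := (apply_nonneg p _).lt_of_ne' fun h =>
    ne_zero_of_mulVec_fromBlocks_zero_eq_smul hμ hv0 hv ((hnv0 _).1 h)
  have hμ_sq := norm_sq_le_of_sq_smul_eq p hcompat hΔt.le hx
    (sq_smul_eq_of_mulVec_fromBlocks_eq_smul hv)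
  refine le_add_sqrt_of_sq_le_two_mul_add ?_
  rw [hε, hγ, map_ofReal_mul]
  linarith

/-- Every nonzero eigenvalue `μ` of `Z = [[E, −Δt·E·F], [G, 0]]` satisfies
`|μ| ≤ ε + √(ε² + 2·Δt·γ·ε)` with `ε = ‖E‖/2` and `γ = ‖F·G‖`, for any
submultiplicative matrix norm compatible with a vector norm. -/
theorem stmt2 {np npi : ℕ}
    (E : Matrix (Fin np) (Fin np) ℝ) (F : Matrix (Fin np) (Fin npi) ℝ)
    (G : Matrix (Fin npi) (Fin np) ℝ) (Δt : ℝ) (hΔt : 0 < Δt)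
    (N : Matrix (Fin np) (Fin np) ℂ → ℝ) (nv : (Fin np → ℂ) → ℝ)
    (hNnonneg : ∀ A, 0 ≤ N A)
    (hNsub : ∀ A B : Matrix (Fin np) (Fin np) ℂ, N (A * B) ≤ N A * N B)
    (hnv0 : ∀ x, nv x = 0 ↔ x = 0)
    (hnvadd : ∀ x y, nv (x + y) ≤ nv x + nv y)
    (hnvsmul : ∀ (c : ℂ) x, nv (c • x) = ‖c‖ * nv x)
    (hcompat : ∀ (A : Matrix (Fin np) (Fin np) ℂ) x, nv (A.mulVec x) ≤ N A * nv x)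
    (Z : Matrix (Fin np ⊕ Fin npi) (Fin np ⊕ Fin npi) ℝ)
    (hZ : Z = fromBlocks E (-(Δt • (E * F))) G 0)
    (ε γ : ℝ)
    (hε : ε = N (E.map Complex.ofReal) / 2)
    (hγ : γ = N ((F * G).map Complex.ofReal))
    (μ : ℂ) (hμ : μ ≠ 0)
    (heig : ∃ v : (Fin np ⊕ Fin npi) → ℂ, v ≠ 0 ∧
      (Z.map Complex.ofReal).mulVec v = μ • v) :
    ‖μ‖ ≤ ε + Real.sqrt (ε ^ 2 + 2 * Δt * γ * ε) :=
  stmt2_general E F G Δt hΔt N nv hnv0 hnvadd hnvsmul hcompat Z hZ ε γ hε hγ μ hμ heig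
end

section
/- With the same data as above (A_ww SPD, H SPD, Δt > 0), for every vector π ∈ ℝ^{n_π} the identity πᵀ·C_π·π = (1/Δt)·pᵀ·H·p + (A_wp·p + A_wπ·π)ᵀ·A_ww⁻¹·(A_wp·p + A_wπ·π) holds, where p = Δt·(H − Δt·A_pw·A_ww⁻¹·A_wp)⁻¹·A_pw·A_ww⁻¹·A_wπ·π. -/
/-!
Put `B = A_ww⁻¹` (symmetric), `S = H − Δt·A_pw·B·A_wp = H + Δt·A_wpᵀ·B·A_wp`, `b = A_wπ·π` and
`y = A_wpᵀ·B·b`. Then `πᵀ·C_π·π = bᵀ·B·b − Δt·yᵀ·S⁻¹·y` and `p = −Δt·S⁻¹·y`. On the right-hand side,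
`(1/Δt)·pᵀ·H·p + (A_wp·p)ᵀ·B·(A_wp·p) = (1/Δt)·pᵀ·S·p = Δt·yᵀ·S⁻¹·y`, while the cross term is
`2·(A_wp·p)ᵀ·B·b = 2·pᵀ·y = −2·Δt·yᵀ·S⁻¹·y`; everything else is `bᵀ·B·b`.
-/

namespace Matrix

variable {K : Type*} [Field K] {m n k : Type*} [Fintype m] [Fintype n] [Fintype k]

theorem dotProduct_transpose_mul_mul_mulVec (F : Matrix n k K) (M : Matrix n n K) (v : k → K) :
    v ⬝ᵥ (Fᵀ * M * F) *ᵥ v = F *ᵥ v ⬝ᵥ M *ᵥ F *ᵥ v := by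
  rw [← mulVec_mulVec, ← mulVec_mulVec, dotProduct_transpose_mulVec, dotProduct_comm]

theorem nonsing_inv_mulVec_dotProduct_mulVec [DecidableEq m] (S : Matrix m m K) (y : m → K) :
    S⁻¹ *ᵥ y ⬝ᵥ S *ᵥ S⁻¹ *ᵥ y = y ⬝ᵥ S⁻¹ *ᵥ y := by
  by_cases hS : IsUnit S.det
  · rw [mulVec_mulVec, mul_nonsing_inv S hS, one_mulVec, dotProduct_comm]
  · simp [nonsing_inv_apply_not_isUnit S hS]

variable [DecidableEq m]

theorem dotProduct_mulVec_schurComplement_eq {B : Matrix n n K} (hB : B.IsSymm) (G : Matrix n m K)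
    (H : Matrix m m K) {Δt : K} (hΔt : Δt ≠ 0) (b : n → K) :
    let S := H + Δt • (Gᵀ * B * G)
    let y := Gᵀ *ᵥ B *ᵥ b
    let p := -Δt • S⁻¹ *ᵥ y
    b ⬝ᵥ B *ᵥ b - Δt * (y ⬝ᵥ S⁻¹ *ᵥ y) =
      1 / Δt * (p ⬝ᵥ H *ᵥ p) + (G *ᵥ p + b) ⬝ᵥ B *ᵥ (G *ᵥ p + b) := by
  intro S y p
  have cross : G *ᵥ p ⬝ᵥ B *ᵥ b = -Δt * (y ⬝ᵥ S⁻¹ *ᵥ y) := by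
    rw [dotProduct_comm, ← dotProduct_transpose_mulVec]
    simp only [p, smul_dotProduct, smul_eq_mul]
    exact congrArg (-Δt * ·) (dotProduct_comm _ _)
  have cross_symm : b ⬝ᵥ B *ᵥ G *ᵥ p = G *ᵥ p ⬝ᵥ B *ᵥ b := by
    rw [← hB.eq, dotProduct_transpose_mulVec, hB.eq]
  have diag : 1 / Δt * (p ⬝ᵥ H *ᵥ p) + G *ᵥ p ⬝ᵥ B *ᵥ G *ᵥ p = Δt * (y ⬝ᵥ S⁻¹ *ᵥ y) := by
    have expand : p ⬝ᵥ S *ᵥ p = p ⬝ᵥ H *ᵥ p + Δt * (G *ᵥ p ⬝ᵥ B *ᵥ G *ᵥ p) := by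
      rw [add_mulVec, dotProduct_add, smul_mulVec, dotProduct_smul,
        dotProduct_transpose_mul_mul_mulVec, smul_eq_mul]
    have collapse : p ⬝ᵥ S *ᵥ p = Δt ^ 2 * (y ⬝ᵥ S⁻¹ *ᵥ y) := by
      simp only [p, mulVec_smul, smul_dotProduct, dotProduct_smul, smul_eq_mul,
        nonsing_inv_mulVec_dotProduct_mulVec]
      ring
    field_simp
    linear_combination collapse - expand
  rw [mulVec_add, add_dotProduct, dotProduct_add, dotProduct_add, cross_symm, cross]
  linear_combination -diag

end Matrix

open Matrix

theorem stmt5_general {nw np npi : ℕ}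
    (Aww : Matrix (Fin nw) (Fin nw) ℝ) (H : Matrix (Fin np) (Fin np) ℝ)
    (Awp : Matrix (Fin nw) (Fin np) ℝ) (Awπ : Matrix (Fin nw) (Fin npi) ℝ)
    (Δt : ℝ) (hΔt : 0 < Δt)
    (hAww : Aww.PosDef)
    (Apw : Matrix (Fin np) (Fin nw) ℝ) (Aπw : Matrix (Fin npi) (Fin nw) ℝ)
    (hApw : Apw = -Awpᵀ) (hAπw : Aπw = -Awπᵀ)
    (Cπ : Matrix (Fin npi) (Fin npi) ℝ)
    (hCπ : Cπ = -(Aπw * Aww⁻¹ * Awπ) -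
      Δt • (Aπw * Aww⁻¹ * Awp * (H - Δt • (Apw * Aww⁻¹ * Awp))⁻¹ *
        (Apw * Aww⁻¹ * Awπ))) :
    ∀ vπ : Fin npi → ℝ, ∀ p : Fin np → ℝ,
      p = Δt • ((H - Δt • (Apw * Aww⁻¹ * Awp))⁻¹.mulVec
        ((Apw * Aww⁻¹ * Awπ).mulVec vπ)) →
      vπ ⬝ᵥ Cπ.mulVec vπ =
        (1 / Δt) * (p ⬝ᵥ H.mulVec p) +
        (Awp.mulVec p + Awπ.mulVec vπ) ⬝ᵥ
          Aww⁻¹.mulVec (Awp.mulVec p + Awπ.mulVec vπ) := by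
  rintro vπ p rfl
  subst hApw hAπw hCπ
  set B := Aww⁻¹
  set S := H + Δt • (Awpᵀ * B * Awp)
  have hB : B.IsSymm := (isHermitian_iff_isSymm.mp hAww.isHermitian).inv
  have hS : H - Δt • (-Awpᵀ * B * Awp) = S := by
    rw [Matrix.neg_mul, Matrix.neg_mul, smul_neg, sub_neg_eq_add]
  have hC : -(-Awπᵀ * B * Awπ) - Δt • (-Awπᵀ * B * Awp * S⁻¹ * (-Awpᵀ * B * Awπ)) =
      Awπᵀ * B * Awπ - Δt • ((Awpᵀ * B * Awπ)ᵀ * S⁻¹ * (Awpᵀ * B * Awπ)) := by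
    simp only [transpose_mul, transpose_transpose, hB.eq, Matrix.neg_mul, Matrix.mul_neg, neg_neg,
      Matrix.mul_assoc]
  rw [hS, hC, sub_mulVec, dotProduct_sub, smul_mulVec, dotProduct_smul, smul_eq_mul,
    dotProduct_transpose_mul_mul_mulVec, dotProduct_transpose_mul_mul_mulVec, Matrix.neg_mul,
    Matrix.neg_mul, neg_mulVec, mulVec_neg, smul_neg, ← neg_smul, ← mulVec_mulVec, ← mulVec_mulVec]
  exact dotProduct_mulVec_schurComplement_eq hB Awp H hΔt.ne' (Awπ *ᵥ vπ)

/-- Key quadratic-form identity for the second-level Schur complement: for every `π`,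
with `p = Δt·(H − Δt·A_pw·A_ww⁻¹·A_wp)⁻¹·A_pw·A_ww⁻¹·A_wπ·π`, one has
`πᵀ C_π π = (1/Δt)·pᵀ H p + (A_wp p + A_wπ π)ᵀ A_ww⁻¹ (A_wp p + A_wπ π)`. -/
theorem stmt5 {nw np npi : ℕ}
    (Aww : Matrix (Fin nw) (Fin nw) ℝ) (H : Matrix (Fin np) (Fin np) ℝ)
    (Awp : Matrix (Fin nw) (Fin np) ℝ) (Awπ : Matrix (Fin nw) (Fin npi) ℝ)
    (Δt : ℝ) (hΔt : 0 < Δt)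
    (hAww : Aww.PosDef) (hH : H.PosDef)
    (Apw : Matrix (Fin np) (Fin nw) ℝ) (Aπw : Matrix (Fin npi) (Fin nw) ℝ)
    (hApw : Apw = -Awpᵀ) (hAπw : Aπw = -Awπᵀ)
    (Cπ : Matrix (Fin npi) (Fin npi) ℝ)
    (hCπ : Cπ = -(Aπw * Aww⁻¹ * Awπ) -
      Δt • (Aπw * Aww⁻¹ * Awp * (H - Δt • (Apw * Aww⁻¹ * Awp))⁻¹ *
        (Apw * Aww⁻¹ * Awπ))) :
    ∀ vπ : Fin npi → ℝ, ∀ p : Fin np → ℝ,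
      p = Δt • ((H - Δt • (Apw * Aww⁻¹ * Awp))⁻¹.mulVec
        ((Apw * Aww⁻¹ * Awπ).mulVec vπ)) →
      vπ ⬝ᵥ Cπ.mulVec vπ =
        (1 / Δt) * (p ⬝ᵥ H.mulVec p) +
        (Awp.mulVec p + Awπ.mulVec vπ) ⬝ᵥ
          Aww⁻¹.mulVec (Awp.mulVec p + Awπ.mulVec vπ) :=
  stmt5_general Aww H Awp Awπ Δt hΔt hAww Apw Aπw hApw hAπw Cπ hCπ
end
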